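/- (Homotopy Ladder Property.) Let ℰ be a model category and T a cofibrant object. Suppose given two stacked pullback squares: U is the pullback of t : V → X along the fibration p : W → X, with projections r : U → V (a fibration) and Φ : U → W; and W is the pullback of s : X → Z along the fibration u : Y → Z, with projections p : W → X and q : W → Y. Given maps σ : T → V, θ : T → W and φ : T → Y such that the outer diagram commutes up to left homotopy, consider the statements: (1) there exists κ : T → U with σ = r∘κ and left homotopies θ ∼ˡ Φ∘κ and φ ∼ˡ q∘Φ∘κ; (2) φ ∼ˡ q∘θ, and there exists θ′ : T → W left homotopic to θ with p∘θ′ = t∘σ; (3) there exists θ′ : T → W left homotopic to θ such that φ is left homotopic to φ′ := q∘θ′ and u∘φ′ = s∘t∘σ. Then (1) and (2) are equivalent, and each implies (3); if moreover s is a monomorphism, then (1), (2) and (3) are all equivalent. -/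

import Mathlib

open CategoryTheory CategoryTheory.Limits

universe v u

noncomputable section

/-- A (Quillen) model structure on a category `ℰ`, given by the classes of weak
equivalences, fibrations and cofibrations, satisfying the usual axioms. -/
structure ModelStruct (ℰ : Type u) [Category.{v} ℰ] : Type (max u v) where
  weq : MorphismProperty ℰ
  fib : MorphismProperty ℰ
  cof : MorphismProperty ℰ
  weq_comp : ∀ {X Y Z : ℰ} (f : X ⟶ Y) (g : Y ⟶ Z), weq f → weq g → weq (f ≫ g)
  weq_cancel_left : ∀ {X Y Z : ℰ} (f : X ⟶ Y) (g : Y ⟶ Z), weq f → weq (f ≫ g) → weq g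
  weq_cancel_right : ∀ {X Y Z : ℰ} (f : X ⟶ Y) (g : Y ⟶ Z), weq g → weq (f ≫ g) → weq f
  weq_retract : ∀ {X Y X' Y' : ℰ} (f : X ⟶ Y) (g : X' ⟶ Y')
    (i : Arrow.mk f ⟶ Arrow.mk g) (r : Arrow.mk g ⟶ Arrow.mk f),
    i ≫ r = 𝟙 _ → weq g → weq f
  fib_retract : ∀ {X Y X' Y' : ℰ} (f : X ⟶ Y) (g : X' ⟶ Y')
    (i : Arrow.mk f ⟶ Arrow.mk g) (r : Arrow.mk g ⟶ Arrow.mk f),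
    i ≫ r = 𝟙 _ → fib g → fib f
  cof_retract : ∀ {X Y X' Y' : ℰ} (f : X ⟶ Y) (g : X' ⟶ Y')
    (i : Arrow.mk f ⟶ Arrow.mk g) (r : Arrow.mk g ⟶ Arrow.mk f),
    i ≫ r = 𝟙 _ → cof g → cof f
  lift_acof_fib : ∀ {A B X Y : ℰ} (i : A ⟶ B) (p : X ⟶ Y),
    cof i → weq i → fib p → HasLiftingProperty i p
  lift_cof_afib : ∀ {A B X Y : ℰ} (i : A ⟶ B) (p : X ⟶ Y),
    cof i → fib p → weq p → HasLiftingProperty i p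
  fact_acof_fib : ∀ {X Y : ℰ} (f : X ⟶ Y), ∃ (Z : ℰ) (i : X ⟶ Z) (p : Z ⟶ Y),
    cof i ∧ weq i ∧ fib p ∧ i ≫ p = f
  fact_cof_afib : ∀ {X Y : ℰ} (f : X ⟶ Y), ∃ (Z : ℰ) (i : X ⟶ Z) (p : Z ⟶ Y),
    cof i ∧ fib p ∧ weq p ∧ i ≫ p = f

variable {ℰ : Type u} [Category.{v} ℰ]

/-- An object is cofibrant if the map from the initial object is a cofibration. -/
def ModelStruct.Cofibrant [HasInitial ℰ] (M : ModelStruct ℰ) (X : ℰ) : Prop :=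
  M.cof (initial.to X)

/-- An object is fibrant if the map to the terminal object is a fibration. -/
def ModelStruct.Fibrant [HasTerminal ℰ] (M : ModelStruct ℰ) (X : ℰ) : Prop :=
  M.fib (terminal.from X)

/-- Left homotopy of two maps, via some cylinder object. -/
def LeftHomotopic [HasBinaryCoproducts ℰ] (M : ModelStruct ℰ) {X Y : ℰ} (f g : X ⟶ Y) : Prop :=
  ∃ (C : ℰ) (i₁ i₂ : X ⟶ C) (p : C ⟶ X) (H : C ⟶ Y),
    M.cof (coprod.desc i₁ i₂) ∧ M.weq p ∧
    i₁ ≫ p = 𝟙 X ∧ i₂ ≫ p = 𝟙 X ∧ i₁ ≫ H = f ∧ i₂ ≫ H = g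

/-- Right homotopy of two maps, via some path object. -/
def RightHomotopic [HasBinaryProducts ℰ] (M : ModelStruct ℰ) {X Y : ℰ} (f g : X ⟶ Y) : Prop :=
  ∃ (P : ℰ) (p₁ p₂ : P ⟶ Y) (s : Y ⟶ P) (H : X ⟶ P),
    M.fib (prod.lift p₁ p₂) ∧ M.weq s ∧
    s ≫ p₁ = 𝟙 Y ∧ s ≫ p₂ = 𝟙 Y ∧ H ≫ p₁ = f ∧ H ≫ p₂ = g

/-- A weak lattice: a locally finite directed indexing category with a degree function. -/
structure WeakLattice (J : Type) [SmallCategory J] where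
  deg : J → ℕ
  locallyFinite : ∀ x y : J, Finite (x ⟶ y)
  connected : IsConnected J
  finitePerDeg : ∀ n : ℕ, Finite { t : J // deg t = n }
  hom_deg_lt : ∀ {x y : J}, (x ⟶ y) → x ≠ y → deg y < deg x
  endo_eq_id : ∀ (x : J) (f : x ⟶ x), f = 𝟙 x
  to_deg_zero : ∀ x : J, ∃ t : J, deg t = 0 ∧ Nonempty (x ⟶ t)

variable {J : Type} [SmallCategory J]

namespace WeakLattice

/-- Objects of degree at most `k` admitting a map from `x`. -/
def Below (L : WeakLattice J) (x : J) (k : ℕ) (t : J) : Prop :=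
  L.deg t ≤ k ∧ Nonempty (x ⟶ t)

/-- The category `∂𝒥ₓᵏ`. -/
abbrev Bdry (L : WeakLattice J) (x : J) (k : ℕ) : Type :=
  ObjectProperty.FullSubcategory (L.Below x k)

/-- The category `𝒥ₓᵏ`: `x` together with `∂𝒥ₓᵏ`. -/
abbrev Jxk (L : WeakLattice J) (x : J) (k : ℕ) : Type :=
  ObjectProperty.FullSubcategory (fun t => t = x ∨ L.Below x k t)

def bdryIncl (L : WeakLattice J) (x : J) (k : ℕ) : L.Bdry x k ⥤ J :=
  ObjectProperty.ι _

def bdryToJxk (L : WeakLattice J) (x : J) (k : ℕ) : L.Bdry x k ⥤ L.Jxk x k :=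
  ObjectProperty.ιOfLE (fun _ ht => Or.inr ht)

/-- `x` as an object of `𝒥ₓᵏ`. -/
def xObj (L : WeakLattice J) (x : J) (k : ℕ) : L.Jxk x k := ⟨x, Or.inl rfl⟩

end WeakLattice

variable [HasLimits ℰ]

/-- The matching object `Mₓᵏ(Y)`: the limit over the comma category `(x ↓ ∂𝒥ₓᵏ)`. -/
def matchObj (L : WeakLattice J) (x : J) (k : ℕ) (Y : L.Bdry x k ⥤ ℰ) : ℰ :=
  limit (StructuredArrow.proj x (L.bdryIncl x k) ⋙ Y)

/-- Index of pairs `(t, f : x ⟶ t)` with `deg t ≤ k`. -/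
abbrev IdxLE (L : WeakLattice J) (x : J) (k : ℕ) : Type :=
  Σ t : L.Bdry x k, (x ⟶ t.obj)

/-- The product `∏_{f : x → t, deg t ≤ k} Y(t)`. -/
def prodLE (L : WeakLattice J) (x : J) (k : ℕ) (Y : L.Bdry x k ⥤ ℰ) : ℰ :=
  ∏ᶜ fun p : IdxLE L x k => Y.obj p.1

/-- The forgetful (monic) map from the matching object to the underlying product. -/
def forgetMap (L : WeakLattice J) (x : J) (k : ℕ) (Y : L.Bdry x k ⥤ ℰ) :
    matchObj L x k Y ⟶ prodLE L x k Y :=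
  Pi.lift fun p => limit.π (StructuredArrow.proj x (L.bdryIncl x k) ⋙ Y)
    (StructuredArrow.mk (Y := p.1) p.2)


/-!
Both equivalences are diagram chases: (1) ⇔ (2) is the universal property of the pullback `U`,
and (3) ⇒ (2) holds because `θ' ≫ p` and `σ ≫ t` agree after composing with the monomorphism `s`.
The homotopical input is that left homotopy is an equivalence relation on maps out of a
cofibrant object. Symmetry swaps the two ends of a cylinder. Transitivity glues two cylinders
along a pushout; since cofibrations and acyclic cofibrations are exactly the maps with the left
lifting property against acyclic fibrations, resp. fibrations, they are stable under cobase change,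
which makes the glued ends a cofibration and the glued projection a weak equivalence.
-/

namespace ModelStruct

variable {𝒞 : Type u} [Category.{v} 𝒞] (M : ModelStruct 𝒞)

lemma cof_eq_llp : M.cof = (M.fib ⊓ M.weq).llp := by
  refine le_antisymm (fun _ _ f hf _ _ g hg ↦ M.lift_cof_afib f g hf hg.1 hg.2) ?_
  intro A B f hf
  obtain ⟨Z, i, p, hi, hp, hp', rfl⟩ := M.fact_cof_afib f
  have := hf p ⟨hp, hp'⟩
  let R : RetractArrow (i ≫ p) i := .ofLeftLiftingProperty rfl
  exact M.cof_retract _ i R.i R.r R.retract hi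

lemma cof_inf_weq_eq_llp : M.cof ⊓ M.weq = M.fib.llp := by
  refine le_antisymm (fun _ _ f hf _ _ g hg ↦ M.lift_acof_fib f g hf.1 hf.2 hg) ?_
  intro A B f hf
  obtain ⟨Z, i, p, hi, hi', hp, rfl⟩ := M.fact_acof_fib f
  have := hf p hp
  let R : RetractArrow (i ≫ p) i := .ofLeftLiftingProperty rfl
  exact ⟨M.cof_retract _ i R.i R.r R.retract hi, M.weq_retract _ i R.i R.r R.retract hi'⟩

instance : M.cof.IsMultiplicative := by
  rw [cof_eq_llp]
  infer_instance

instance : M.cof.IsStableUnderCobaseChange := by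
  rw [cof_eq_llp]
  infer_instance

instance : (M.cof ⊓ M.weq).IsStableUnderCobaseChange := by
  rw [cof_inf_weq_eq_llp]
  infer_instance

lemma cof_of_isIso {A B : 𝒞} (f : A ⟶ B) [IsIso f] : M.cof f :=
  M.cof_eq_llp ▸ MorphismProperty.llp_of_isIso _ f

lemma weq_id (X : 𝒞) : M.weq (𝟙 X) := by
  obtain ⟨Z, i, p, -, -, hp, hip⟩ := M.fact_cof_afib (𝟙 X)
  let R : RetractArrow (𝟙 X) p := .ofRightLiftingProperty hip
  exact M.weq_retract _ p R.i R.r R.retract hp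

variable {M}

lemma weq_left_of_comp_eq_id {A B : 𝒞} {i : A ⟶ B} {p : B ⟶ A} (h : i ≫ p = 𝟙 A)
    (hp : M.weq p) : M.weq i :=
  M.weq_cancel_right i p hp (h ▸ M.weq_id A)

lemma weq_right_of_comp_eq_id {A B : 𝒞} {i : A ⟶ B} {p : B ⟶ A} (h : i ≫ p = 𝟙 A)
    (hi : M.weq i) : M.weq p :=
  M.weq_cancel_left i p hi (h ▸ M.weq_id A)

lemma cof_coprod_inl [HasBinaryCoproducts 𝒞] [HasInitial 𝒞] (A : 𝒞) {B : 𝒞}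
    (hB : M.Cofibrant B) : M.cof (coprod.inl : A ⟶ A ⨿ B) :=
  M.cof.of_isPushout (IsPushout.of_hasBinaryCoproduct' A B) hB

lemma cof_left_of_cof_coprod_desc [HasBinaryCoproducts 𝒞] [HasInitial 𝒞] {X C : 𝒞}
    (hX : M.Cofibrant X) {i₁ i₂ : X ⟶ C} (hc : M.cof (coprod.desc i₁ i₂)) : M.cof i₁ := by
  simpa [coprod.inl_desc] using M.cof.comp_mem _ _ (cof_coprod_inl X hX) hc

lemma cof_coprod_desc_of_isPushout [HasBinaryCoproducts 𝒞] {T C₁ C₂ P : 𝒞}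
    {i₁ i₂ : T ⟶ C₁} {i₁' i₂' : T ⟶ C₂} {inl : C₁ ⟶ P} {inr : C₂ ⟶ P}
    (hpo : IsPushout i₂ i₁' inl inr) (hi₁ : M.cof i₁) (hc : M.cof (coprod.desc i₁' i₂')) :
    M.cof (coprod.desc (i₁ ≫ inl) (i₂' ≫ inr)) := by
  -- Factor through `C₁ ⨿ T`: both factors are cobase changes of cofibrations.
  have hmap : M.cof (coprod.map i₁ (𝟙 T)) :=
    M.cof.of_isPushout (IsPushout.of_coprod_inl_with_id i₁ T) hi₁
  have hsq : IsPushout (coprod.map i₂ (𝟙 T)) (coprod.desc i₁' i₂')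
      (coprod.desc inl (i₂' ≫ inr)) inr :=
    IsPushout.of_top (by simpa [coprod.inl_desc] using hpo)
      (by ext <;> simp [coprod.inl_desc, coprod.inr_desc, hpo.w])
      (IsPushout.of_coprod_inl_with_id i₂ T).flip
  convert M.cof.comp_mem _ _ hmap (M.cof.of_isPushout hsq hc) using 1
  ext <;> simp [coprod.inl_desc, coprod.inr_desc]

end ModelStruct

namespace LeftHomotopic

open ModelStruct

variable {𝒞 : Type u} [Category.{v} 𝒞] {M : ModelStruct 𝒞}

lemma comp_right [HasBinaryCoproducts 𝒞] {X Y Z : 𝒞} {f g : X ⟶ Y}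
    (h : LeftHomotopic M f g) (k : Y ⟶ Z) : LeftHomotopic M (f ≫ k) (g ≫ k) := by
  obtain ⟨C, i₁, i₂, π, H, hc, hπ, e₁, e₂, rfl, rfl⟩ := h
  exact ⟨C, i₁, i₂, π, H ≫ k, hc, hπ, e₁, e₂, by simp, by simp⟩

lemma symm [HasBinaryCoproducts 𝒞] {X Y : 𝒞} {f g : X ⟶ Y} (h : LeftHomotopic M f g) :
    LeftHomotopic M g f := by
  obtain ⟨C, i₁, i₂, π, H, hc, hπ, e₁, e₂, h₁, h₂⟩ := h
  refine ⟨C, i₂, i₁, π, H, ?_, hπ, e₂, e₁, h₂, h₁⟩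
  have hswap : coprod.desc i₂ i₁ = (coprod.braiding X X).hom ≫ coprod.desc i₁ i₂ := by
    ext <;> simp [coprod.braiding, coprod.inl_desc, coprod.inr_desc]
  rw [hswap]
  exact M.cof.comp_mem _ _ (M.cof_of_isIso _) hc

lemma trans [HasBinaryCoproducts 𝒞] [HasInitial 𝒞] [HasPushouts 𝒞] {X Y : 𝒞}
    (hX : M.Cofibrant X) {f g h : X ⟶ Y} (h₁ : LeftHomotopic M f g)
    (h₂ : LeftHomotopic M g h) : LeftHomotopic M f h := by
  obtain ⟨C₁, i₁, i₂, π₁, H₁, hc₁, hπ₁, e₁, e₂, rfl, hg⟩ := h₁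
  obtain ⟨C₂, i₁', i₂', π₂, H₂, hc₂, hπ₂, e₁', e₂', hg', rfl⟩ := h₂
  have hpo := IsPushout.of_hasPushout i₂ i₁'
  have hinl : (M.cof ⊓ M.weq) (pushout.inl i₂ i₁') :=
    (M.cof ⊓ M.weq).of_isPushout hpo
      ⟨cof_left_of_cof_coprod_desc hX hc₂, weq_left_of_comp_eq_id e₁' hπ₂⟩
  have hj₁ : M.weq (i₁ ≫ pushout.inl i₂ i₁') :=
    M.weq_comp _ _ (weq_left_of_comp_eq_id e₁ hπ₁) hinl.2
  have hπ : (i₁ ≫ pushout.inl i₂ i₁') ≫ hpo.desc π₁ π₂ (e₂.trans e₁'.symm) = 𝟙 X := by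
    simp [e₁]
  exact ⟨pushout i₂ i₁', i₁ ≫ pushout.inl i₂ i₁', i₂' ≫ pushout.inr i₂ i₁',
    hpo.desc π₁ π₂ (e₂.trans e₁'.symm), hpo.desc H₁ H₂ (hg.trans hg'.symm),
    cof_coprod_desc_of_isPushout hpo (cof_left_of_cof_coprod_desc hX hc₁) hc₂,
    weq_right_of_comp_eq_id hπ hj₁, hπ, by simp [e₂'], by simp, by simp⟩

end LeftHomotopic

theorem homotopy_ladder_property_general {ℰ : Type u} [Category.{v} ℰ]
    [HasColimits ℰ] (M : ModelStruct ℰ)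
    (T : ℰ) (hT : M.Cofibrant T)
    {U V W X Y Z : ℰ}
    (r : U ⟶ V) (Φ : U ⟶ W) (t : V ⟶ X) (p : W ⟶ X)
    (q : W ⟶ Y) (s : X ⟶ Z) (u : Y ⟶ Z)
    (hpb₁ : IsPullback r Φ t p) (hpb₂ : IsPullback p q s u)
    (σ : T ⟶ V) (θ : T ⟶ W) (φ : T ⟶ Y) :
    -- (1) ↔ (2), (2) → (3), and if `s` is a monomorphism all three are equivalent
    ((∃ κ : T ⟶ U, σ = κ ≫ r ∧ LeftHomotopic M θ (κ ≫ Φ) ∧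
        LeftHomotopic M φ (κ ≫ Φ ≫ q)) ↔
      (LeftHomotopic M φ (θ ≫ q) ∧
        ∃ θ' : T ⟶ W, LeftHomotopic M θ' θ ∧ θ' ≫ p = σ ≫ t)) ∧
    ((LeftHomotopic M φ (θ ≫ q) ∧
        ∃ θ' : T ⟶ W, LeftHomotopic M θ' θ ∧ θ' ≫ p = σ ≫ t) →
      (∃ θ' : T ⟶ W, LeftHomotopic M θ' θ ∧
        LeftHomotopic M φ (θ' ≫ q) ∧ (θ' ≫ q) ≫ u = σ ≫ t ≫ s)) ∧
    (Mono s →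
      ((∃ θ' : T ⟶ W, LeftHomotopic M θ' θ ∧
          LeftHomotopic M φ (θ' ≫ q) ∧ (θ' ≫ q) ≫ u = σ ≫ t ≫ s) →
        (LeftHomotopic M φ (θ ≫ q) ∧
          ∃ θ' : T ⟶ W, LeftHomotopic M θ' θ ∧ θ' ≫ p = σ ≫ t))) := by
  have transport {θ₁ θ₂ : T ⟶ W} (hφ : LeftHomotopic M φ (θ₁ ≫ q))
      (hθ : LeftHomotopic M θ₂ θ₁) : LeftHomotopic M φ (θ₂ ≫ q) :=
    hφ.trans hT (hθ.comp_right q).symm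
  refine ⟨⟨?_, ?_⟩, ?_, ?_⟩
  · rintro ⟨κ, rfl, hθ, hφ⟩
    exact ⟨transport (by simpa using hφ) hθ, κ ≫ Φ, hθ.symm, by simp [hpb₁.w]⟩
  · rintro ⟨hφθ, θ', hθ', hθ'p⟩
    refine ⟨hpb₁.lift σ θ' hθ'p.symm, by simp, by simpa using hθ'.symm, ?_⟩
    simpa using transport hφθ hθ'
  · rintro ⟨hφθ, θ', hθ', hθ'p⟩
    exact ⟨θ', hθ', transport hφθ hθ', by simp [← hpb₂.w, reassoc_of% hθ'p]⟩
  · rintro hs ⟨θ', hθ', hφ', hθ'u⟩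
    refine ⟨transport hφ' hθ'.symm, θ', hθ', ?_⟩
    rw [← cancel_mono s]
    simpa [hpb₂.w] using hθ'u

/-- STATEMENT 18 (Homotopy Ladder Property) -/
theorem homotopy_ladder_property {ℰ : Type u} [Category.{v} ℰ]
    [HasLimits ℰ] [HasColimits ℰ] (M : ModelStruct ℰ)
    (T : ℰ) (hT : M.Cofibrant T)
    {U V W X Y Z : ℰ}
    (r : U ⟶ V) (Φ : U ⟶ W) (t : V ⟶ X) (p : W ⟶ X)
    (q : W ⟶ Y) (s : X ⟶ Z) (u : Y ⟶ Z)
    (hp : M.fib p) (hu : M.fib u) (hr : M.fib r)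
    (hpb₁ : IsPullback r Φ t p) (hpb₂ : IsPullback p q s u)
    (σ : T ⟶ V) (θ : T ⟶ W) (φ : T ⟶ Y)
    -- the outer diagram commutes up to left homotopy
    (houter : LeftHomotopic M (φ ≫ u) (σ ≫ t ≫ s)) :
    -- (1) ↔ (2), (2) → (3), and if `s` is a monomorphism all three are equivalent
    ((∃ κ : T ⟶ U, σ = κ ≫ r ∧ LeftHomotopic M θ (κ ≫ Φ) ∧
        LeftHomotopic M φ (κ ≫ Φ ≫ q)) ↔
      (LeftHomotopic M φ (θ ≫ q) ∧
        ∃ θ' : T ⟶ W, LeftHomotopic M θ' θ ∧ θ' ≫ p = σ ≫ t)) ∧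
    ((LeftHomotopic M φ (θ ≫ q) ∧
        ∃ θ' : T ⟶ W, LeftHomotopic M θ' θ ∧ θ' ≫ p = σ ≫ t) →
      (∃ θ' : T ⟶ W, LeftHomotopic M θ' θ ∧
        LeftHomotopic M φ (θ' ≫ q) ∧ (θ' ≫ q) ≫ u = σ ≫ t ≫ s)) ∧
    (Mono s →
      ((∃ θ' : T ⟶ W, LeftHomotopic M θ' θ ∧
          LeftHomotopic M φ (θ' ≫ q) ∧ (θ' ≫ q) ≫ u = σ ≫ t ≫ s) →
        (LeftHomotopic M φ (θ ≫ q) ∧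
          ∃ θ' : T ⟶ W, LeftHomotopic M θ' θ ∧ θ' ≫ p = σ ≫ t))) :=
  homotopy_ladder_property_general M T hT r Φ t p q s u hpb₁ hpb₂ σ θ φ

end
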